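/- Let φ : ℝ^d × ℝ^d → [0,∞] be measurable, β > 0 and z > 0. Assume (A2): S := sup_{x∈ℝ^d} ∫_{ℝ^d} (1 − e^{−βφ(x,y)}) dy < ∞, and (A3): S = lim_{a→0⁺} sup_{x∈ℝ^d} ∫_{ℝ^d} Ψ_a(x,y) dy. If z·S < 1, then there exists a > 0 such that sup_{i∈ℤ^d} Σ_{j∈ℤ^d, j≠i} z · sup_{y ∈ Λ_{a,j}} ∫_{Λ_{a,i}} (1 − e^{−βφ(x,y)}) dx < 1; in other words, the Dobrushin condition holds at some positive mesh size a. -/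

import Mathlib

/-!
The Dobrushin one-site sum at mesh `a` is dominated by `z · sup_x ∫ Ψ_a(x, y) dy`: bounding
`sup_{y ∈ Λ_{a,j}} ∫_{Λ_{a,i}} f(x, y) dx` by `∫_{Λ_{a,i}} sup_{y ∈ Λ_{a,j}} f(x, y) dx`, summing over
`j` and then taking the supremum in `x` costs the factor `|Λ_{a,i}| = a^d`, which is exactly the
factor produced by integrating the step function `Ψ_a(x, ·)`. By (A3) the right-hand side tends
to `z · S < 1` as `a → 0⁺`, so it is below `1` for some `a > 0`.
-/

open MeasureTheory ENNReal

/-- The half-open cube `Λ_{a,j} = a j + (−a/2, a/2]^d` of side `a` centred at `a j`. -/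
def cube (d : ℕ) (a : ℝ) (j : Fin d → ℤ) : Set (EuclideanSpace ℝ (Fin d)) :=
  {x | ∀ k : Fin d, x k - a * (j k : ℝ) ∈ Set.Ioc (-(a / 2)) (a / 2)}

/-- `expNegE t = e^{−t}` for `t ∈ [0,∞]` as an element of `[0,∞]`, with `e^{−∞} = 0`. -/
noncomputable def expNegE (t : ℝ≥0∞) : ℝ≥0∞ :=
  if t = ∞ then 0 else ENNReal.ofReal (Real.exp (-t.toReal))

/-- The Mayer function `(x,y) ↦ 1 − e^{−βφ(x,y)}`, valued in `[0,∞]` (in fact `[0,1]`). -/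
noncomputable def mayer {d : ℕ}
    (φ : EuclideanSpace ℝ (Fin d) → EuclideanSpace ℝ (Fin d) → ℝ≥0∞) (β : ℝ)
    (x y : EuclideanSpace ℝ (Fin d)) : ℝ≥0∞ :=
  1 - expNegE (ENNReal.ofReal β * φ x y)

/-- The discretised Mayer majorant
`Ψ_a(x,y) = Σ_{j∈ℤ^d} 1_{y ∈ Λ_{a,j}} · sup_{y' ∈ Λ_{a,j}} (1 − e^{−βφ(x,y')})`. -/
noncomputable def Psi {d : ℕ}
    (φ : EuclideanSpace ℝ (Fin d) → EuclideanSpace ℝ (Fin d) → ℝ≥0∞) (β : ℝ) (a : ℝ)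
    (x y : EuclideanSpace ℝ (Fin d)) : ℝ≥0∞ :=
  ∑' j : Fin d → ℤ,
    (cube d a j).indicator (fun _ => ⨆ y' ∈ cube d a j, mayer φ β x y') y

section Cubes

variable (d : ℕ) (a : ℝ) (j : Fin d → ℤ)

lemma cube_eq_preimage_pi :
    cube d a j = (MeasurableEquiv.toLp 2 (Fin d → ℝ)).symm ⁻¹'
      Set.univ.pi fun k => Set.Ioc (a * j k - a / 2) (a * j k + a / 2) := by
  ext x
  simp only [cube, Set.mem_ofPred_eq, Set.mem_preimage, Set.mem_pi, Set.mem_univ, true_implies,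
    Set.mem_Ioc]
  refine forall_congr' fun k => ?_
  change _ ↔ _ < x k ∧ x k ≤ _
  constructor <;> rintro ⟨h₁, h₂⟩ <;> constructor <;> linarith

lemma measurableSet_cube : MeasurableSet (cube d a j) := by
  rw [cube_eq_preimage_pi]
  exact (MeasurableEquiv.toLp 2 (Fin d → ℝ)).symm.measurable
    (MeasurableSet.univ_pi fun _ => measurableSet_Ioc)

lemma volume_cube : volume (cube d a j) = ENNReal.ofReal a ^ d := by
  rw [cube_eq_preimage_pi,
    (EuclideanSpace.volume_preserving_symm_measurableEquiv_toLp (Fin d)).measure_preimage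
      (MeasurableSet.univ_pi fun _ => measurableSet_Ioc).nullMeasurableSet,
    volume_pi_pi]
  simp only [Real.volume_Ioc, add_sub_sub_cancel, add_halves, Finset.prod_const,
    Finset.card_univ, Fintype.card_fin]

end Cubes

-- No measurability is assumed: suprema over uncountable cubes need not be measurable.
lemma tsum_lintegral_le_lintegral_tsum {α ι : Type*} [MeasurableSpace α] (μ : Measure α)
    (f : ι → α → ℝ≥0∞) : ∑' i, ∫⁻ x, f i x ∂μ ≤ ∫⁻ x, ∑' i, f i x ∂μ := by
  classical
  have sum_le : ∀ s : Finset ι, ∑ i ∈ s, ∫⁻ x, f i x ∂μ ≤ ∫⁻ x, ∑ i ∈ s, f i x ∂μ := by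
    intro s
    induction s using Finset.induction_on with
    | empty => simp
    | insert i s hi ih =>
      simp only [Finset.sum_insert hi]
      exact (add_le_add le_rfl ih).trans (le_lintegral_add _ _)
  rw [ENNReal.tsum_eq_iSup_sum]
  exact iSup_le fun s => (sum_le s).trans (lintegral_mono fun x => ENNReal.sum_le_tsum s)

lemma tsum_iSup_setLIntegral_le {α β ι : Type*} [MeasurableSpace α] (μ : Measure α)
    (f : α → β → ℝ≥0∞) (s : Set α) (t : ι → Set β) :
    ∑' j, ⨆ y ∈ t j, ∫⁻ x in s, f x y ∂μ ≤ μ s * ⨆ x, ∑' j, ⨆ y ∈ t j, f x y :=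
  calc ∑' j, ⨆ y ∈ t j, ∫⁻ x in s, f x y ∂μ
      ≤ ∑' j, ∫⁻ x in s, ⨆ y ∈ t j, f x y ∂μ :=
        ENNReal.tsum_le_tsum fun j => iSup₂_le fun y hy =>
          lintegral_mono fun x => le_iSup₂ (f := fun y (_ : y ∈ t j) => f x y) y hy
    _ ≤ ∫⁻ x in s, ∑' j, ⨆ y ∈ t j, f x y ∂μ := tsum_lintegral_le_lintegral_tsum _ _
    _ ≤ ∫⁻ _ in s, ⨆ x, ∑' j, ⨆ y ∈ t j, f x y ∂μ :=
        lintegral_mono fun x => le_iSup (fun x => ∑' j, ⨆ y ∈ t j, f x y) x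
    _ = μ s * ⨆ x, ∑' j, ⨆ y ∈ t j, f x y := by rw [setLIntegral_const, mul_comm]

section Dobrushin

variable {d : ℕ} (φ : EuclideanSpace ℝ (Fin d) → EuclideanSpace ℝ (Fin d) → ℝ≥0∞) (β a : ℝ)

lemma lintegral_Psi (x : EuclideanSpace ℝ (Fin d)) :
    ∫⁻ y, Psi φ β a x y =
      ENNReal.ofReal a ^ d * ∑' j : Fin d → ℤ, ⨆ y ∈ cube d a j, mayer φ β x y := by
  unfold Psi
  rw [lintegral_tsum fun j =>
      (measurable_const.indicator (measurableSet_cube d a j)).aemeasurable,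
    ← ENNReal.tsum_mul_left]
  refine tsum_congr fun j => ?_
  rw [lintegral_indicator (measurableSet_cube d a j), setLIntegral_const, volume_cube, mul_comm]

noncomputable def dobrushinSum (z : ℝ) (i : Fin d → ℤ) : ℝ≥0∞ :=
  ∑' j : {j : Fin d → ℤ // j ≠ i},
    ENNReal.ofReal z * ⨆ y ∈ cube d a (j : Fin d → ℤ), ∫⁻ x in cube d a i, mayer φ β x y

lemma dobrushinSum_le_iSup_lintegral_Psi (z : ℝ) (i : Fin d → ℤ) :
    dobrushinSum φ β a z i ≤ ENNReal.ofReal z * ⨆ x, ∫⁻ y, Psi φ β a x y :=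
  calc dobrushinSum φ β a z i
      ≤ ∑' j : Fin d → ℤ,
          ENNReal.ofReal z * ⨆ y ∈ cube d a j, ∫⁻ x in cube d a i, mayer φ β x y :=
        ENNReal.tsum_comp_le_tsum_of_injective Subtype.val_injective _
    _ ≤ ENNReal.ofReal z * (volume (cube d a i) *
          ⨆ x, ∑' j : Fin d → ℤ, ⨆ y ∈ cube d a j, mayer φ β x y) := by
        rw [ENNReal.tsum_mul_left]
        exact mul_le_mul_right (tsum_iSup_setLIntegral_le _ _ _ _) _
    _ = ENNReal.ofReal z * ⨆ x, ∫⁻ y, Psi φ β a x y := by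
        simp only [volume_cube, ENNReal.mul_iSup, lintegral_Psi]

end Dobrushin

theorem dobrushin_condition_of_explicit_bound_general
    {d : ℕ} (φ : EuclideanSpace ℝ (Fin d) → EuclideanSpace ℝ (Fin d) → ℝ≥0∞)
    {β : ℝ} {z : ℝ}
    (hA3 : Filter.Tendsto
      (fun a : ℝ => ⨆ x : EuclideanSpace ℝ (Fin d), ∫⁻ y, Psi φ β a x y)
      (nhdsWithin 0 (Set.Ioi 0))
      (nhds (⨆ x : EuclideanSpace ℝ (Fin d), ∫⁻ y, mayer φ β x y)))
    (hzS : ENNReal.ofReal z * (⨆ x : EuclideanSpace ℝ (Fin d), ∫⁻ y, mayer φ β x y) < 1) :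
    ∃ a : ℝ, 0 < a ∧
      (⨆ i : Fin d → ℤ, ∑' j : {j : Fin d → ℤ // j ≠ i},
        ENNReal.ofReal z *
          ⨆ y ∈ cube d a (j : Fin d → ℤ), ∫⁻ x in cube d a i, mayer φ β x y) < 1 := by
  have eventually_lt : ∀ᶠ a in nhdsWithin (0 : ℝ) (Set.Ioi 0),
      ENNReal.ofReal z * (⨆ x, ∫⁻ y, Psi φ β a x y) < 1 :=
    (ENNReal.Tendsto.const_mul hA3 (Or.inr ofReal_ne_top)).eventually_lt_const hzS
  obtain ⟨a, hlt, ha⟩ := (eventually_lt.and eventually_mem_nhdsWithin).exists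
  exact ⟨a, ha, (iSup_le fun i => dobrushinSum_le_iSup_lintegral_Psi φ β a z i).trans_lt hlt⟩

/-- Analytic core of the uniqueness theorem: under (A2) (finite uniform Mayer integral)
and (A3) (the uniform integral of `Ψ_a` converges to that of the Mayer function as the
mesh `a → 0⁺`), the explicit condition `z·S < 1` guarantees that the Dobrushin one-site
sum is strictly below `1` at some positive mesh size `a`. -/
theorem dobrushin_condition_of_explicit_bound
    {d : ℕ} (φ : EuclideanSpace ℝ (Fin d) → EuclideanSpace ℝ (Fin d) → ℝ≥0∞)
    (hφ : Measurable (Function.uncurry φ))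
    {β : ℝ} (hβ : 0 < β) {z : ℝ} (hz : 0 < z)
    (hA2 : (⨆ x : EuclideanSpace ℝ (Fin d), ∫⁻ y, mayer φ β x y) ≠ ∞)
    (hA3 : Filter.Tendsto
      (fun a : ℝ => ⨆ x : EuclideanSpace ℝ (Fin d), ∫⁻ y, Psi φ β a x y)
      (nhdsWithin 0 (Set.Ioi 0))
      (nhds (⨆ x : EuclideanSpace ℝ (Fin d), ∫⁻ y, mayer φ β x y)))
    (hzS : ENNReal.ofReal z * (⨆ x : EuclideanSpace ℝ (Fin d), ∫⁻ y, mayer φ β x y) < 1) :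
    ∃ a : ℝ, 0 < a ∧
      (⨆ i : Fin d → ℤ, ∑' j : {j : Fin d → ℤ // j ≠ i},
        ENNReal.ofReal z *
          ⨆ y ∈ cube d a (j : Fin d → ℤ), ∫⁻ x in cube d a i, mayer φ β x y) < 1 :=
  dobrushin_condition_of_explicit_bound_general φ hA3 hzS
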